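/- arXiv:1203.2749 — 3 statements merged into one kernel-verified Lean document; each statement's English description precedes it below -/
import Mathlib

section
/- Let β > -1 and τ ∈ ℝ, and let Γ̂ be a closed smooth contour in ℂ \ {0} avoiding the branch cut of s^β. Then r(z) := ∫_{Γ̂} s^β e^{-τ/s + 1/(2s²) - zs} ds satisfies the adjoint ODE z r'''(z) + (β+3) r''(z) - τ r'(z) - r(z) = 0. -/
/-!
Differentiating under the integral sign, the `k`-th derivative of `r` is the integral of the
same integrand multiplied by `(-s)^k`, so the left-hand side of the ODE is the contour integral
of `e^{φ(s) - zs} (z(-s)³ + (β+3)s² + τs - 1)`, where `e^{φ(s)} = s^β e^{-τ/s + 1/(2s²)}`.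
Since `φ'(s) = β/s + τ/s² - 1/s³`, this integrand is exactly `d/ds (e^{φ(s) - zs} s³)`, and the
integral of a derivative along a closed path vanishes.
-/

open Complex Metric intervalIntegral

section PathLaplace

variable {γ g : ℝ → ℂ} {a b : ℝ}

noncomputable def pathLaplace (γ g : ℝ → ℂ) (a b : ℝ) (z : ℂ) : ℂ :=
  ∫ u in a..b, cexp (-z * γ u) * g u

theorem norm_cexp_neg_mul_le {w z s : ℂ} (hw : w ∈ ball z 1) :
    ‖cexp (-w * s)‖ ≤ Real.exp ((‖z‖ + 1) * ‖s‖) := by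
  rw [norm_exp, Real.exp_le_exp]
  have hw' : ‖w‖ ≤ ‖z‖ + 1 := by
    have := norm_le_norm_add_norm_sub' w z
    rw [mem_ball_iff_norm] at hw
    linarith
  calc (-w * s).re ≤ ‖-w * s‖ := re_le_norm _
    _ = ‖w‖ * ‖s‖ := by rw [norm_mul, norm_neg]
    _ ≤ (‖z‖ + 1) * ‖s‖ := by gcongr

theorem hasDerivAt_pathLaplace (hγ : Continuous γ) (hg : Continuous g) (z : ℂ) :
    HasDerivAt (pathLaplace γ g a b) (pathLaplace γ (-γ * g) a b z) z := by
  have hF : ∀ (f : ℝ → ℂ) (w : ℂ), Continuous f → Continuous fun u => cexp (-w * γ u) * f u :=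
    fun f w hf => by fun_prop
  refine (intervalIntegral.hasDerivAt_integral_of_dominated_loc_of_deriv_le
    (ball_mem_nhds z one_pos) (F' := fun w u => cexp (-w * γ u) * (-γ * g) u)
    (bound := fun u => Real.exp ((‖z‖ + 1) * ‖γ u‖) * (‖γ u‖ * ‖g u‖))
    (Filter.Eventually.of_forall fun w => (hF g w hg).aestronglyMeasurable)
    ((hF g z hg).intervalIntegrable a b)
    (hF _ z (hγ.neg.mul hg)).aestronglyMeasurable ?_
    ((by fun_prop : Continuous _).intervalIntegrable a b) ?_).2
  · refine MeasureTheory.ae_of_all _ fun u _ w hw => ?_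
    simp only [Pi.mul_apply, Pi.neg_apply, norm_mul, norm_neg]
    gcongr
    exact norm_cexp_neg_mul_le hw
  · refine MeasureTheory.ae_of_all _ fun u _ w _ => ?_
    have hlin : HasDerivAt (fun x : ℂ => -x * γ u) (-γ u) w := by
      simpa using (hasDerivAt_neg w).mul_const (γ u)
    simpa only [Pi.mul_apply, Pi.neg_apply, mul_assoc] using hlin.cexp.mul_const (g u)

theorem iteratedDeriv_pathLaplace (hγ : Continuous γ) (hg : Continuous g) (n : ℕ) :
    iteratedDeriv n (pathLaplace γ g a b) = pathLaplace γ ((-γ) ^ n * g) a b := by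
  induction n with
  | zero => simp
  | succ n ih =>
    rw [iteratedDeriv_succ, ih, pow_succ, mul_comm _ (-γ), mul_assoc]
    exact funext fun z => (hasDerivAt_pathLaplace hγ (by fun_prop) z).deriv

theorem pathLaplace_cubic_combination (hγ : Continuous γ) (hg : Continuous g) (z c₂ c₁ : ℂ) :
    z * pathLaplace γ ((-γ) ^ 3 * g) a b z + c₂ * pathLaplace γ ((-γ) ^ 2 * g) a b z
        - c₁ * pathLaplace γ (-γ * g) a b z - pathLaplace γ g a b z =
      pathLaplace γ (fun u => (z * (-γ u) ^ 3 + c₂ * (-γ u) ^ 2 - c₁ * (-γ u) - 1) * g u)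
        a b z := by
  simp only [pathLaplace, Pi.mul_apply, Pi.pow_apply, Pi.neg_apply]
  rw [← integral_const_mul, ← integral_const_mul, ← integral_const_mul, ← integral_add,
    ← integral_sub, ← integral_sub]
  · exact integral_congr fun u _ => by ring
  all_goals exact Continuous.intervalIntegrable (by fun_prop) a b

end PathLaplace

theorem integral_deriv_comp_mul_deriv_eq_zero {U : Set ℂ} {F : ℂ → ℂ} {γ : ℝ → ℂ} {a b : ℝ}
    (hU : IsOpen U) (hF : DifferentiableOn ℂ F U) (hγ : ContDiff ℝ 1 γ) (hγU : ∀ u, γ u ∈ U)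
    (hclosed : γ a = γ b) :
    ∫ u in a..b, deriv F (γ u) * deriv γ u = 0 := by
  have hFγ : ∀ u, HasDerivAt (F ∘ γ) (deriv F (γ u) * deriv γ u) u := fun u =>
    ((hF.differentiableAt (hU.mem_nhds (hγU u))).hasDerivAt).comp u
      ((hγ.differentiable one_ne_zero u).hasDerivAt)
  have hcont : Continuous fun u => deriv F (γ u) * deriv γ u :=
    ((hF.deriv hU).continuousOn.comp_continuous hγ.continuous hγU).mul
      (hγ.continuous_deriv le_rfl)
  rw [integral_eq_sub_of_hasDerivAt (fun u _ => hFγ u) (hcont.intervalIntegrable a b),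
    Function.comp_apply, Function.comp_apply, hclosed, sub_self]

/-- `exp (adjointPhase β τ s) = s^β e^{-τ/s + 1/(2s²)}`, with the branch of `s^β` cut along the
positive real axis. -/
noncomputable def adjointPhase (β τ : ℂ) (s : ℂ) : ℂ :=
  β * (log (-s) + Real.pi * I) - τ / s + 1 / (2 * s ^ 2)

theorem hasDerivAt_adjointPhase {β τ s : ℂ} (hs : -s ∈ slitPlane) :
    HasDerivAt (adjointPhase β τ) (β / s + τ / s ^ 2 - 1 / s ^ 3) s := by
  have hs0 : s ≠ 0 := by simpa using slitPlane_ne_zero hs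
  have hlog : HasDerivAt (fun s => log (-s)) ((-s)⁻¹ * -1) s :=
    (hasDerivAt_log hs).comp s (hasDerivAt_neg s)
  have hsq : HasDerivAt (fun s : ℂ => 2 * s ^ 2) (2 * (2 * s)) s := by
    simpa using (hasDerivAt_pow 2 s).const_mul (2 : ℂ)
  have hinv := (hasDerivAt_const s τ).div (hasDerivAt_id' s) hs0
  exact ((((hlog.add_const _).const_mul β).sub hinv).add
    ((hasDerivAt_const s (1 : ℂ)).div hsq (by simpa using hs0))).congr_deriv (by field_simp; ring)

noncomputable def adjointPrimitive (β τ z : ℂ) (s : ℂ) : ℂ :=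
  cexp (adjointPhase β τ s - z * s) * s ^ 3

theorem hasDerivAt_adjointPrimitive {β τ z s : ℂ} (hs : -s ∈ slitPlane) :
    HasDerivAt (adjointPrimitive β τ z)
      (cexp (-z * s) * ((z * (-s) ^ 3 + (β + 3) * (-s) ^ 2 - τ * (-s) - 1) *
        cexp (adjointPhase β τ s))) s := by
  have hs0 : s ≠ 0 := by simpa using slitPlane_ne_zero hs
  have hexp := ((hasDerivAt_adjointPhase (β := β) (τ := τ) hs).sub
    ((hasDerivAt_id' s).const_mul z)).cexp
  refine (hexp.mul (hasDerivAt_pow 3 s)).congr_deriv ?_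
  rw [Pi.sub_apply, sub_eq_neg_add, exp_add, ← neg_mul]
  field_simp
  ring

theorem pathLaplace_deriv_adjointPrimitive_eq_zero {γ : ℝ → ℂ} {a b : ℝ} (β τ z : ℂ)
    (hγ : ContDiff ℝ 1 γ) (hclosed : γ a = γ b) (hmem : ∀ u, -γ u ∈ slitPlane) :
    pathLaplace γ (fun u => (z * (-γ u) ^ 3 + (β + 3) * (-γ u) ^ 2 - τ * (-γ u) - 1) *
      (cexp (adjointPhase β τ (γ u)) * deriv γ u)) a b z = 0 := by
  have hF : DifferentiableOn ℂ (adjointPrimitive β τ z) {s | -s ∈ slitPlane} := fun s hs =>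
    (hasDerivAt_adjointPrimitive hs).differentiableAt.differentiableWithinAt
  rw [← integral_deriv_comp_mul_deriv_eq_zero (isOpen_slitPlane.preimage continuous_neg) hF hγ
    hmem hclosed]
  refine integral_congr fun u _ => ?_
  rw [(hasDerivAt_adjointPrimitive (hmem u)).deriv]
  ring

theorem contour_integral_solves_adjoint_ODE_general
    (β τ : ℝ)
    (γ : ℝ → ℂ) (hγ : ContDiff ℝ 1 γ) (hclosed : γ 0 = γ 1)
    (hcut : ∀ u, ¬(0 ≤ (γ u).re ∧ (γ u).im = 0))
    (r : ℂ → ℂ)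
    (hr : ∀ z : ℂ, r z = ∫ u in (0:ℝ)..1,
      Complex.exp ((β:ℂ) * (Complex.log (-(γ u)) + (Real.pi : ℂ) * Complex.I)) *
        Complex.exp (-(τ:ℂ) / γ u + 1 / (2 * (γ u)^2) - z * γ u) * deriv γ u) :
    ∀ z : ℂ,
      z * iteratedDeriv 3 r z + ((β:ℂ) + 3) * iteratedDeriv 2 r z
        - (τ:ℂ) * deriv r z - r z = 0 := by
  intro z
  have hmem : ∀ u, -γ u ∈ slitPlane := fun u => by
    simpa [mem_slitPlane_iff, or_iff_not_imp_left] using hcut u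
  set g : ℝ → ℂ := fun u => cexp (adjointPhase β τ (γ u)) * deriv γ u
  have hg : Continuous g := continuous_iff_continuousAt.2 fun u =>
    ((hasDerivAt_adjointPhase (hmem u)).continuousAt.comp hγ.continuous.continuousAt).cexp.mul
      (hγ.continuous_deriv le_rfl).continuousAt
  have hr' : r = pathLaplace γ g 0 1 := funext fun w => by
    rw [hr]
    refine integral_congr fun u _ => ?_
    simp only [g, adjointPhase, ← mul_assoc, ← exp_add]
    ring_nf
  have hD (n : ℕ) : iteratedDeriv n r = pathLaplace γ ((-γ) ^ n * g) 0 1 := by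
    rw [hr']
    exact iteratedDeriv_pathLaplace hγ.continuous hg n
  rw [← iteratedDeriv_one, hD 3, hD 2, hD 1, pow_one, hr',
    pathLaplace_cubic_combination hγ.continuous hg]
  exact pathLaplace_deriv_adjointPrimitive_eq_zero β τ z hγ hclosed hmem

/-- The contour integral `r(z) = ∫_Γ̂ s^β e^{-τ/s + 1/(2s²) - zs} ds` over a closed smooth
contour `Γ̂` in `ℂ \ {0}` avoiding the branch cut of `s^β` (taken on the positive real axis,
realized as `s^β = exp(β (log(-s) + πi))`) satisfies the adjoint third order ODE
`z r'''(z) + (β+3) r''(z) - τ r'(z) - r(z) = 0`. -/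
theorem contour_integral_solves_adjoint_ODE
    (β τ : ℝ) (hβ : -1 < β)
    (γ : ℝ → ℂ) (hγ : ContDiff ℝ 1 γ) (hclosed : γ 0 = γ 1)
    (hne : ∀ u, γ u ≠ 0)
    (hcut : ∀ u, ¬(0 ≤ (γ u).re ∧ (γ u).im = 0))
    (r : ℂ → ℂ)
    (hr : ∀ z : ℂ, r z = ∫ u in (0:ℝ)..1,
      Complex.exp ((β:ℂ) * (Complex.log (-(γ u)) + (Real.pi : ℂ) * Complex.I)) *
        Complex.exp (-(τ:ℂ) / γ u + 1 / (2 * (γ u)^2) - z * γ u) * deriv γ u) :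
    ∀ z : ℂ,
      z * iteratedDeriv 3 r z + ((β:ℂ) + 3) * iteratedDeriv 2 r z
        - (τ:ℂ) * deriv r z - r z = 0 :=
  contour_integral_solves_adjoint_ODE_general β τ γ hγ hclosed hcut r hr
end

section
/- If matrices A_n, B_n, E_n, F_n, V_n, W_n (3×3 complex) satisfy: B_n A_n = I + O(n^{-7/6}), V_n W_n = 0 = W_n V_n = V_n V_n = W_n W_n (rank-one nilpotent structure with V_n, W_n = O(1)), E_n = O(n^{1/2}), F_n = O(n^{1/2}), F_n E_n = I + O(n^{-1/2}), and F_n (W_n - V_n) E_n = O(n^{-1}), then F_n (I + W_n) B_n A_n (I - V_n) E_n = I + O(n^{-1/6}) as n → ∞. -/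
open Matrix Asymptotics Filter

attribute [local instance] Matrix.linftyOpNormedRing

lemma rpow_isBigO_rpow (a b : ℝ) (h : a ≤ b) :
    (fun n : ℕ => (n:ℝ)^a) =O[atTop] fun n => (n:ℝ)^b := by
  rw [Asymptotics.isBigO_iff]
  refine ⟨1, ?_⟩
  filter_upwards [eventually_ge_atTop 1] with n hn
  have h1 : (1:ℝ) ≤ (n:ℝ) := by exact_mod_cast hn
  have h0 : (0:ℝ) < (n:ℝ) := lt_of_lt_of_le one_pos h1
  rw [Real.norm_eq_abs, Real.norm_eq_abs, abs_of_nonneg (Real.rpow_nonneg h0.le _),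
    abs_of_nonneg (Real.rpow_nonneg h0.le _), one_mul]
  exact Real.rpow_le_rpow_of_exponent_le h1 h

/-- Matrix asymptotics used in the proof of Proposition 3.2: if
`Bₙ Aₙ = I + O(n^{-7/6})`, `Vₙ, Wₙ = O(1)` with all pairwise products of `Vₙ, Wₙ`
vanishing, `Eₙ, Fₙ = O(n^{1/2})`, `Fₙ Eₙ = I + O(n^{-1/2})` and
`Fₙ (Wₙ - Vₙ) Eₙ = O(n^{-1})`, then
`Fₙ (I + Wₙ) Bₙ Aₙ (I - Vₙ) Eₙ = I + O(n^{-1/6})` as `n → ∞`. -/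
theorem matrix_asymptotics_combination
    (A B E F V W : ℕ → Matrix (Fin 3) (Fin 3) ℂ)
    (hBA : (fun n => B n * A n - 1) =O[atTop] fun n => (n:ℝ)^(-(7:ℝ)/6))
    (hV : (fun n => V n) =O[atTop] fun _ => (1:ℝ))
    (hW : (fun n => W n) =O[atTop] fun _ => (1:ℝ))
    (hVW : ∀ n, V n * W n = 0 ∧ W n * V n = 0 ∧ V n * V n = 0 ∧ W n * W n = 0)
    (hE : (fun n => E n) =O[atTop] fun n => (n:ℝ)^((1:ℝ)/2))
    (hF : (fun n => F n) =O[atTop] fun n => (n:ℝ)^((1:ℝ)/2))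
    (hFE : (fun n => F n * E n - 1) =O[atTop] fun n => (n:ℝ)^(-(1:ℝ)/2))
    (hFWVE : (fun n => F n * (W n - V n) * E n) =O[atTop] fun n => (n:ℝ)^(-(1:ℝ))) :
    (fun n => F n * (1 + W n) * (B n * A n) * (1 - V n) * E n - 1)
      =O[atTop] fun n => (n:ℝ)^(-(1:ℝ)/6) := by
  have key : ∀ n, F n * (1 + W n) * (B n * A n) * (1 - V n) * E n - 1
      = F n * ((1 + W n) * ((B n * A n - 1) * ((1 - V n) * E n)))
        + ((F n * E n - 1) + F n * (W n - V n) * E n) := by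
    intro n
    have hWV : W n * (V n * E n) = 0 := by rw [← mul_assoc, (hVW n).2.1, zero_mul]
    simp only [mul_add, add_mul, mul_sub, sub_mul, mul_one, one_mul, mul_assoc, hWV,
      zero_mul, mul_zero]
    abel
  have h1W : (fun n => (1:Matrix (Fin 3) (Fin 3) ℂ) + W n) =O[atTop] fun _ => (1:ℝ) :=
    (isBigO_const_const _ one_ne_zero _).add hW
  have h1V : (fun n => (1:Matrix (Fin 3) (Fin 3) ℂ) - V n) =O[atTop] fun _ => (1:ℝ) :=
    (isBigO_const_const _ one_ne_zero _).sub hV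
  have hprod : (fun n => F n * ((1 + W n) * ((B n * A n - 1) * ((1 - V n) * E n))))
      =O[atTop] fun n : ℕ => (n:ℝ)^((1:ℝ)/2) * ((1:ℝ) * ((n:ℝ)^(-(7:ℝ)/6)
        * ((1:ℝ) * (n:ℝ)^((1:ℝ)/2)))) :=
    hF.mul (h1W.mul (hBA.mul (h1V.mul hE)))
  have heq : (fun n : ℕ => (n:ℝ)^((1:ℝ)/2) * ((1:ℝ) * ((n:ℝ)^(-(7:ℝ)/6)
        * ((1:ℝ) * (n:ℝ)^((1:ℝ)/2))))) =ᶠ[atTop]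
        fun n : ℕ => (n:ℝ)^(-(1:ℝ)/6) := by
    filter_upwards [eventually_gt_atTop 0] with n hn
    have h0 : (0:ℝ) < (n:ℝ) := by exact_mod_cast hn
    rw [one_mul, one_mul, ← Real.rpow_add h0, ← Real.rpow_add h0]
    norm_num
  have hrest : (fun n => (F n * E n - 1) + F n * (W n - V n) * E n)
      =O[atTop] fun n => (n:ℝ)^(-(1:ℝ)/6) :=
    (hFE.trans (rpow_isBigO_rpow _ _ (by norm_num))).add
      (hFWVE.trans (rpow_isBigO_rpow _ _ (by norm_num)))
  have := ((hprod.trans heq.isBigO).add hrest)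
  exact this.congr_left fun n => (key n).symm
end

section
/- Let w₁, w₂ be nonnegative integrable weights supported on intervals Δ₁, Δ₂ with disjoint interiors, and let f₁,...,f_{|n⃗|} be the functions x^{j-1} w_i(x). Then the Angelesco density P(x₁,...,x_N) = (1/Z) det[x_k^{j-1}] · det[f_j(x_k)] (N = n₁+n₂, Z > 0 the normalizing constant) is nonnegative for all (x₁,...,x_N) ∈ ℝ^N. -/
open Matrix

lemma aux_wvdm_nonneg {n : ℕ} (y : Fin n → ℝ) (hy : Monotone y)
    (w : ℝ → ℝ) (hw : ∀ t, 0 ≤ w t) :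
    0 ≤ det (Matrix.of fun j k : Fin n => y k ^ (j : ℕ) * w (y k)) := by
  have h1 : (Matrix.of fun j k : Fin n => y k ^ (j : ℕ) * w (y k)) =
      Matrix.of fun j k : Fin n => (fun k => w (y k)) k * ((vandermonde y)ᵀ j k) := by
    ext j k
    simp [vandermonde, mul_comm]
  rw [h1, Matrix.det_mul_row, det_transpose, det_vandermonde]
  have h2 : (0:ℝ) ≤ ∏ i : Fin n, ∏ j ∈ Finset.Ioi i, (y j - y i) := by
    refine Finset.prod_nonneg fun i _ => Finset.prod_nonneg fun j hj => ?_
    exact sub_nonneg.2 (hy (le_of_lt (Finset.mem_Ioi.1 hj)))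
  exact mul_nonneg (Finset.prod_nonneg fun k _ => hw _) h2

/-- The second determinant is nonnegative when the nodes are strictly monotone. -/
lemma key_det2_nonneg (b c : ℝ) (hbc : b ≤ c)
    (w₁ w₂ : ℝ → ℝ)
    (hw₁pos : ∀ x, 0 ≤ w₁ x) (hw₂pos : ∀ x, 0 ≤ w₂ x)
    (hw₁supp : ∀ x, b < x → w₁ x = 0)
    (hw₂supp : ∀ x, x < c → w₂ x = 0)
    (n₁ n₂ : ℕ) (x : Fin (n₁ + n₂) → ℝ) (hx : StrictMono x) :
    0 ≤ det (Matrix.of fun j k : Fin (n₁ + n₂) =>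
      if (j : ℕ) < n₁ then x k ^ (j : ℕ) * w₁ (x k) else x k ^ ((j : ℕ) - n₁) * w₂ (x k)) := by
  set M : Matrix (Fin (n₁ + n₂)) (Fin (n₁ + n₂)) ℝ := Matrix.of fun j k =>
      if (j : ℕ) < n₁ then x k ^ (j : ℕ) * w₁ (x k) else x k ^ ((j : ℕ) - n₁) * w₂ (x k) with hM
  rw [← Matrix.det_submatrix_equiv_self finSumFinEquiv M]
  have m1 : Monotone fun k : Fin n₁ => x (Fin.castAdd n₂ k) := by
    intro i j hij
    rw [Fin.le_def] at hij
    exact hx.monotone (by rw [Fin.le_def]; simp only [Fin.coe_castAdd]; exact hij)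
  have m2 : Monotone fun k : Fin n₂ => x (Fin.natAdd n₁ k) := by
    intro i j hij
    rw [Fin.le_def] at hij
    exact hx.monotone (by rw [Fin.le_def]; simp only [Fin.coe_natAdd]; omega)
  by_cases h2 : ∀ k : Fin (n₁ + n₂), (k : ℕ) < n₁ → w₂ (x k) = 0
  · -- bottom-left block is zero
    have hblk : M.submatrix finSumFinEquiv finSumFinEquiv =
        fromBlocks
          (Matrix.of fun j k : Fin n₁ =>
            x (Fin.castAdd n₂ k) ^ (j : ℕ) * w₁ (x (Fin.castAdd n₂ k)))
          (Matrix.of fun (j : Fin n₁) (k : Fin n₂) =>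
            x (Fin.natAdd n₁ k) ^ (j : ℕ) * w₁ (x (Fin.natAdd n₁ k)))
          0
          (Matrix.of fun j k : Fin n₂ =>
            x (Fin.natAdd n₁ k) ^ (j : ℕ) * w₂ (x (Fin.natAdd n₁ k))) := by
      ext j k
      cases j with
      | inl j =>
        cases k with
        | inl k =>
          simp only [hM, Matrix.submatrix_apply, finSumFinEquiv_apply_left, Matrix.of_apply,
            Matrix.fromBlocks_apply₁₁, Fin.coe_castAdd]
          rw [if_pos j.is_lt]
        | inr k =>
          simp only [hM, Matrix.submatrix_apply, finSumFinEquiv_apply_left,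
            finSumFinEquiv_apply_right, Matrix.of_apply, Matrix.fromBlocks_apply₁₂,
            Fin.coe_castAdd]
          rw [if_pos j.is_lt]
      | inr j =>
        cases k with
        | inl k =>
          have hz : w₂ (x (Fin.castAdd n₂ k)) = 0 := h2 _ (by simp [k.is_lt])
          simp only [hM, Matrix.submatrix_apply, finSumFinEquiv_apply_left,
            finSumFinEquiv_apply_right, Matrix.of_apply, Matrix.fromBlocks_apply₂₁,
            Fin.coe_natAdd, Fin.coe_castAdd, Matrix.zero_apply]
          rw [if_neg (by omega), hz, mul_zero]
        | inr k =>
          simp only [hM, Matrix.submatrix_apply, finSumFinEquiv_apply_right, Matrix.of_apply,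
            Matrix.fromBlocks_apply₂₂, Fin.coe_natAdd]
          rw [if_neg (by omega), Nat.add_sub_cancel_left]
    rw [hblk, Matrix.det_fromBlocks_zero₂₁]
    exact mul_nonneg (aux_wvdm_nonneg _ m1 w₁ hw₁pos) (aux_wvdm_nonneg _ m2 w₂ hw₂pos)
  · -- there is k₀ < n₁ with w₂ (x k₀) ≠ 0; then the top-right block is zero
    push_neg at h2
    obtain ⟨k₀, hk₀lt, hk₀⟩ := h2
    have hxk₀ : c ≤ x k₀ := by
      by_contra h
      exact hk₀ (hw₂supp _ (lt_of_not_ge h))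
    have h3 : ∀ k : Fin (n₁ + n₂), n₁ ≤ (k : ℕ) → w₁ (x k) = 0 := by
      intro k hk
      refine hw₁supp _ ?_
      have : x k₀ < x k := hx (by rw [Fin.lt_def]; omega)
      linarith
    have hblk : M.submatrix finSumFinEquiv finSumFinEquiv =
        fromBlocks
          (Matrix.of fun j k : Fin n₁ =>
            x (Fin.castAdd n₂ k) ^ (j : ℕ) * w₁ (x (Fin.castAdd n₂ k)))
          0
          (Matrix.of fun (j : Fin n₂) (k : Fin n₁) =>
            x (Fin.castAdd n₂ k) ^ (j : ℕ) * w₂ (x (Fin.castAdd n₂ k)))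
          (Matrix.of fun j k : Fin n₂ =>
            x (Fin.natAdd n₁ k) ^ (j : ℕ) * w₂ (x (Fin.natAdd n₁ k))) := by
      ext j k
      cases j with
      | inl j =>
        cases k with
        | inl k =>
          simp only [hM, Matrix.submatrix_apply, finSumFinEquiv_apply_left, Matrix.of_apply,
            Matrix.fromBlocks_apply₁₁, Fin.coe_castAdd]
          rw [if_pos j.is_lt]
        | inr k =>
          have hz : w₁ (x (Fin.natAdd n₁ k)) = 0 := h3 _ (by simp)
          simp only [hM, Matrix.submatrix_apply, finSumFinEquiv_apply_left,
            finSumFinEquiv_apply_right, Matrix.of_apply, Matrix.fromBlocks_apply₁₂,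
            Fin.coe_castAdd, Matrix.zero_apply]
          rw [if_pos j.is_lt, hz, mul_zero]
      | inr j =>
        cases k with
        | inl k =>
          simp only [hM, Matrix.submatrix_apply, finSumFinEquiv_apply_left,
            finSumFinEquiv_apply_right, Matrix.of_apply, Matrix.fromBlocks_apply₂₁,
            Fin.coe_natAdd, Fin.coe_castAdd]
          rw [if_neg (by omega), Nat.add_sub_cancel_left]
        | inr k =>
          simp only [hM, Matrix.submatrix_apply, finSumFinEquiv_apply_right, Matrix.of_apply,
            Matrix.fromBlocks_apply₂₂, Fin.coe_natAdd]
          rw [if_neg (by omega), Nat.add_sub_cancel_left]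
    rw [hblk, Matrix.det_fromBlocks_zero₁₂]
    exact mul_nonneg (aux_wvdm_nonneg _ m1 w₁ hw₁pos) (aux_wvdm_nonneg _ m2 w₂ hw₂pos)

/-- The product of the two determinants is nonnegative for monotone nodes. -/
lemma key_prod_nonneg (b c : ℝ) (hbc : b ≤ c)
    (w₁ w₂ : ℝ → ℝ)
    (hw₁pos : ∀ x, 0 ≤ w₁ x) (hw₂pos : ∀ x, 0 ≤ w₂ x)
    (hw₁supp : ∀ x, b < x → w₁ x = 0)
    (hw₂supp : ∀ x, x < c → w₂ x = 0)
    (n₁ n₂ : ℕ) (x : Fin (n₁ + n₂) → ℝ) (hx : Monotone x) :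
    0 ≤ det (Matrix.of fun j k : Fin (n₁ + n₂) => x k ^ (j : ℕ)) *
      det (Matrix.of fun j k : Fin (n₁ + n₂) =>
        if (j : ℕ) < n₁ then x k ^ (j : ℕ) * w₁ (x k) else x k ^ ((j : ℕ) - n₁) * w₂ (x k)) := by
  have hV : (Matrix.of fun j k : Fin (n₁ + n₂) => x k ^ (j : ℕ)) = (vandermonde x)ᵀ := by
    ext j k; simp [vandermonde]
  rw [hV, det_transpose, det_vandermonde]
  by_cases hP : (∏ i : Fin (n₁ + n₂), ∏ j ∈ Finset.Ioi i, (x j - x i)) = 0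
  · rw [hP, zero_mul]
  · have hPnn : (0:ℝ) ≤ ∏ i : Fin (n₁ + n₂), ∏ j ∈ Finset.Ioi i, (x j - x i) := by
      refine Finset.prod_nonneg fun i _ => Finset.prod_nonneg fun j hj => ?_
      exact sub_nonneg.2 (hx (le_of_lt (Finset.mem_Ioi.1 hj)))
    have hsm : StrictMono x := by
      intro i j hij
      have hne : x j - x i ≠ 0 := by
        have := (Finset.prod_ne_zero_iff.1 hP) i (Finset.mem_univ i)
        exact Finset.prod_ne_zero_iff.1 this j (Finset.mem_Ioi.2 hij)
      exact lt_of_le_of_ne (hx hij.le) fun h => hne (by rw [h]; ring)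
    exact mul_nonneg hPnn
      (key_det2_nonneg b c hbc w₁ w₂ hw₁pos hw₂pos hw₁supp hw₂supp n₁ n₂ x hsm)

/-- Nonnegativity of the Angelesco density: if `w₁` vanishes outside `[a,b]`, `w₂` vanishes
outside `[c,d]`, both are nonnegative, and `b ≤ c`, then with
`f_j(x) = x^{j-1} w₁(x)` for `j ≤ n₁`, `f_{n₁+j}(x) = x^{j-1} w₂(x)` for `j ≤ n₂`, the
product `det[x_k^{j-1}] · det[f_j(x_k)]` is nonnegative for all real `x₁, …, x_N`,
`N = n₁ + n₂`. -/
theorem angelesco_density_nonneg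
    (a b c d : ℝ) (hbc : b ≤ c)
    (w₁ w₂ : ℝ → ℝ)
    (hw₁pos : ∀ x, 0 ≤ w₁ x) (hw₂pos : ∀ x, 0 ≤ w₂ x)
    (hw₁supp : ∀ x, x ∉ Set.Icc a b → w₁ x = 0)
    (hw₂supp : ∀ x, x ∉ Set.Icc c d → w₂ x = 0)
    (n₁ n₂ : ℕ)
    (f : Fin (n₁ + n₂) → ℝ → ℝ)
    (hf : ∀ j : Fin (n₁ + n₂), ∀ x : ℝ,
      f j x = if (j : ℕ) < n₁ then x ^ (j : ℕ) * w₁ x else x ^ ((j : ℕ) - n₁) * w₂ x) :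
    ∀ x : Fin (n₁ + n₂) → ℝ,
      0 ≤ det (Matrix.of fun j k : Fin (n₁ + n₂) => x k ^ (j : ℕ)) *
            det (Matrix.of fun j k : Fin (n₁ + n₂) => f j (x k)) := by
  intro x
  have hw₁supp' : ∀ t, b < t → w₁ t = 0 := fun t ht =>
    hw₁supp t (by simp [Set.mem_Icc]; intro _; linarith)
  have hw₂supp' : ∀ t, t < c → w₂ t = 0 := fun t ht =>
    hw₂supp t (by simp [Set.mem_Icc]; intro h; linarith)
  have hM2 : (Matrix.of fun j k : Fin (n₁ + n₂) => f j (x k)) =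
      Matrix.of fun j k : Fin (n₁ + n₂) =>
        if (j : ℕ) < n₁ then x k ^ (j : ℕ) * w₁ (x k) else x k ^ ((j : ℕ) - n₁) * w₂ (x k) := by
    ext j k; exact hf j (x k)
  rw [hM2]
  set σ := Tuple.sort x with hσ
  have hmono : Monotone (x ∘ σ) := Tuple.monotone_sort x
  have key := key_prod_nonneg b c hbc w₁ w₂ hw₁pos hw₂pos hw₁supp' hw₂supp' n₁ n₂ (x ∘ σ) hmono
  have e1 : (Matrix.of fun j k : Fin (n₁ + n₂) => (x ∘ σ) k ^ (j : ℕ)) =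
      (Matrix.of fun j k : Fin (n₁ + n₂) => x k ^ (j : ℕ)).submatrix id σ := rfl
  have e2 : (Matrix.of fun j k : Fin (n₁ + n₂) =>
        if (j : ℕ) < n₁ then (x ∘ σ) k ^ (j : ℕ) * w₁ ((x ∘ σ) k)
        else (x ∘ σ) k ^ ((j : ℕ) - n₁) * w₂ ((x ∘ σ) k)) =
      (Matrix.of fun j k : Fin (n₁ + n₂) =>
        if (j : ℕ) < n₁ then x k ^ (j : ℕ) * w₁ (x k)
        else x k ^ ((j : ℕ) - n₁) * w₂ (x k)).submatrix id σ := rfl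
  rw [e1, e2, Matrix.det_permute', Matrix.det_permute'] at key
  set s : ℝ := ((Equiv.Perm.sign σ : ℤ) : ℝ) with hs
  have hss : s * s = 1 := by
    rcases Int.units_eq_one_or (Equiv.Perm.sign σ) with h | h <;>
      rw [hs, h] <;> norm_num
  calc (0:ℝ) ≤ (s * det (Matrix.of fun j k : Fin (n₁ + n₂) => x k ^ (j : ℕ))) *
      (s * det (Matrix.of fun j k : Fin (n₁ + n₂) =>
        if (j : ℕ) < n₁ then x k ^ (j : ℕ) * w₁ (x k)
        else x k ^ ((j : ℕ) - n₁) * w₂ (x k))) := key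
    _ = _ := by rw [mul_mul_mul_comm, hss, one_mul]
end
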